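/- Let (T,m) be a complete local ring with m ∉ Ass(T) and let p be a nonmaximal prime ideal of T. Let (R, R∩m) be an infinite p-subring of T and let u ∈ T. Then there exists a p-subring (S, S∩m) of T such that R ⊆ S ⊆ T, the coset u + m² lies in the image of the map S → T/m², and |S| = |R|. -/

import Mathlib

open IsLocalRing

/-- The `q`-th Frobenius power `I^{[q]}` of an ideal: the ideal generated by `q`-th powers of
elements of `I`. -/
def Ideal.frobPow {R : Type*} [CommRing R] (I : Ideal R) (q : ℕ) : Ideal R :=
  Ideal.span ((fun r => r ^ q) '' (I : Set R))

/-- Membership in the tight closure `I*` of an ideal `I` in a ring of characteristic `p`: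
there is a `c` outside every minimal prime with `c * x^{p^e} ∈ I^{[p^e]}` for all `e ≫ 0`. -/
def Ideal.MemTightClosure {R : Type*} [CommRing R] (p : ℕ) (I : Ideal R) (x : R) : Prop :=
  ∃ c : R, (∀ P ∈ minimalPrimes R, c ∉ P) ∧
    ∃ E : ℕ, ∀ e : ℕ, E ≤ e → c * x ^ p ^ e ∈ I.frobPow (p ^ e)

/-- A ring of characteristic `p` is weakly F-regular if every ideal is tightly closed. -/
def WeaklyFRegular (R : Type*) [CommRing R] (p : ℕ) : Prop :=
  ∀ (I : Ideal R) (x : R), I.MemTightClosure p x → x ∈ I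

/-- A ring is F-regular if all of its localizations are weakly F-regular. -/
def FRegular (R : Type*) [CommRing R] (p : ℕ) : Prop :=
  ∀ S : Submonoid R, WeaklyFRegular (Localization S) p

/-- A ring is catenary if any two saturated chains of primes with the same endpoints have
the same length. -/
def IsCatenaryRing (R : Type*) [CommRing R] : Prop :=
  ∀ (n m : ℕ) (f : Fin (n + 1) → PrimeSpectrum R) (g : Fin (m + 1) → PrimeSpectrum R),
    f 0 = g 0 → f (Fin.last n) = g (Fin.last m) →
    (∀ i : Fin n, f i.castSucc ⋖ f i.succ) → (∀ i : Fin m, g i.castSucc ⋖ g i.succ) →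
    n = m

/-- `y` generates the socle of `T/I`, i.e. `(I : m) = I + (y)` and `y ∉ I`. -/
def IsSocleGenerator {T : Type*} [CommRing T] [IsLocalRing T] (I : Ideal T) (y : T) : Prop :=
  y ∉ I ∧ I.colon (maximalIdeal T) = I ⊔ Ideal.span {y}

/-- An approximately Gorenstein sequence: a descending chain of `m`-primary ideals with
Gorenstein quotients, cofinal with the powers of `m`. -/
def IsApproxGorensteinSeq (T : Type*) [CommRing T] [IsLocalRing T] (I : ℕ → Ideal T) : Prop :=
  Antitone I ∧ (∀ s, (I s).radical = maximalIdeal T) ∧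
  (∀ s, ∃ y, IsSocleGenerator (I s) y) ∧
  ∀ N : ℕ, ∃ S : ℕ, ∀ s : ℕ, S ≤ s → I s ≤ maximalIdeal T ^ N

/-- The set `M_{I,y} = ⋃_{e ≥ 1} ⋂_{f ≥ e} (I^{[p^f]} : y^{p^f})`. -/
def MIy {T : Type*} [CommRing T] (p : ℕ) (I : Ideal T) (y : T) : Set T :=
  {c : T | ∃ e : ℕ, 1 ≤ e ∧ ∀ f : ℕ, e ≤ f → c * y ^ p ^ f ∈ I.frobPow (p ^ f)}

/-- `depth T ≥ n`: there is a regular sequence of length `n` in the maximal ideal. -/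
def DepthGE (T : Type*) [CommRing T] [IsLocalRing T] (n : ℕ) : Prop :=
  ∃ rs : List T, rs.length = n ∧ (∀ x ∈ rs, x ∈ maximalIdeal T) ∧
    RingTheory.Sequence.IsRegular T rs

/-- A Noetherian local ring is Cohen–Macaulay iff there is a regular sequence in the maximal
ideal of length equal to the Krull dimension. -/
def IsCohenMacaulayLocal (T : Type*) [CommRing T] [IsLocalRing T] : Prop :=
  ∃ rs : List T, (∀ x ∈ rs, x ∈ maximalIdeal T) ∧ RingTheory.Sequence.IsRegular T rs ∧
    (rs.length : WithBot (WithTop ℕ)) = ringKrullDim T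

/-- A parameter ideal: generated by `dim T` elements, with radical the maximal ideal. -/
def IsParameterIdeal (T : Type*) [CommRing T] [IsLocalRing T] (I : Ideal T) : Prop :=
  ∃ (n : ℕ) (x : Fin n → T), I = Ideal.span (Set.range x) ∧ I.radical = maximalIdeal T ∧
    (n : WithBot (WithTop ℕ)) = ringKrullDim T

/-- A Noetherian local ring is Gorenstein iff it is Cohen–Macaulay and every parameter ideal
is irreducible (has one-dimensional socle). -/
def IsGorensteinLocal (T : Type*) [CommRing T] [IsLocalRing T] : Prop :=
  IsCohenMacaulayLocal T ∧ ∀ I : Ideal T, IsParameterIdeal T I → ∃ y, IsSocleGenerator I y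

/-- A `p`-subring of a local ring `T`: a quasi-local subring `(R, R ∩ m)` which is small,
misses `p`, and misses every associated prime of `T`. -/
def IsPSubring (T : Type*) [CommRing T] [IsLocalRing T] (P : Ideal T) (R : Subring T) : Prop :=
  IsLocalRing R ∧ (Ideal.comap R.subtype (maximalIdeal T)).IsMaximal ∧
  (Cardinal.mk R ≤ max Cardinal.aleph0 (Cardinal.mk (ResidueField T)) ∧
    (Cardinal.mk R = max Cardinal.aleph0 (Cardinal.mk (ResidueField T)) →
      Cardinal.mk (ResidueField T) ≤ Cardinal.aleph0)) ∧
  Ideal.comap R.subtype P = ⊥ ∧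
  ∀ Q ∈ associatedPrimes T T, Ideal.comap R.subtype Q = ⊥

/-- An N-subring of a local ring `T`: a quasi-local UFD `(R, R ∩ m)` inside `T` which is small,
misses every associated prime of `T`, and such that `R ∩ J` has height at most one for every
`J ∈ Ass(T/tT)`, `t` a nonzerodivisor. -/
def IsNSubring (T : Type*) [CommRing T] [IsLocalRing T] (R : Subring T) : Prop :=
  IsLocalRing R ∧ (Ideal.comap R.subtype (maximalIdeal T)).IsMaximal ∧
  (∃ _ : IsDomain R, UniqueFactorizationMonoid R) ∧
  (Cardinal.mk R ≤ max Cardinal.aleph0 (Cardinal.mk (ResidueField T)) ∧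
    (Cardinal.mk R = max Cardinal.aleph0 (Cardinal.mk (ResidueField T)) →
      Cardinal.mk (ResidueField T) ≤ Cardinal.aleph0)) ∧
  (∀ Q ∈ associatedPrimes T T, Ideal.comap R.subtype Q = ⊥) ∧
  ∀ t ∈ nonZeroDivisors T, ∀ J ∈ associatedPrimes T (T ⧸ Ideal.span {t}),
    ∀ q0 q1 : Ideal R, q0.IsPrime → q1.IsPrime →
      ¬(q0 < q1 ∧ q1 < Ideal.comap R.subtype J)


/-!
Pick `x ∈ u + m²` whose image in `T ⧸ q` is transcendental over `R` for every `q` in the finite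
set `{P} ∪ Ass T`, and let `S` be `R[x]` localized at `R[x] ∩ m`, inside `T`. A fraction of `S`
lying in `q` has its numerator, a polynomial in `x` over `R`, in `q`; so `S ∩ q = 0`, and
`|S| = |R[x]| = |R|`.

Such an `x` comes from a Baire category argument in the complete `m`-adic topology, applied to
countably many sets with dense interior. If `R` is countable these are the sets `{y | f(y) ∉ q}`
for `f ∈ R[X]` nonzero: they are open by Krull's intersection theorem and dense because `T ⧸ q`
is infinite. Otherwise `|R| < |T/m|` and we take, for each `q`, the set of `y` with `y + q`
transcendental: fewer than `|T/m|` classes of `T ⧸ q` are algebraic, and an element of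
`m^n \ (q + m^(n+1))` has `|T/m|` multiples that are pairwise distinct modulo `q + m^(n+1)`.
-/

open IsLocalRing Polynomial Cardinal

section AdicBaire

variable {R : Type*} [CommRing R] (I : Ideal R)

/-- The interior of `G` in the `I`-adic topology is dense. -/
def Ideal.AdicInteriorDense (G : Set R) : Prop :=
  ∀ (y : R) (n : ℕ), ∃ z k, z - y ∈ I ^ n ∧ ∀ w, w - z ∈ I ^ k → w ∈ G

variable {I}

theorem IsPrecomplete.exists_forall_sub_mem_pow [IsPrecomplete I R] {z : ℕ → R} {k : ℕ → ℕ}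
    (hk : StrictMono k) (hz : ∀ j, z (j + 1) - z j ∈ I ^ k j) :
    ∃ L, ∀ j, L - z j ∈ I ^ k j := by
  have hcauchy : ∀ a b, a ≤ b → z b - z a ∈ I ^ k a := by
    intro a b hab
    induction b, hab using Nat.le_induction with
    | base => simp
    | succ b hab ih =>
      rw [← sub_add_sub_cancel]
      exact add_mem (Ideal.pow_le_pow_right (hk.monotone hab) (hz b)) ih
  have hsmul : ∀ n, I ^ n • (⊤ : Submodule R R) = I ^ n := fun n => by
    rw [smul_eq_mul, Ideal.mul_top]
  obtain ⟨L, hL⟩ := IsPrecomplete.prec ‹_› (f := z) fun {a b} hab => by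
    rw [SModEq.sub_mem, hsmul, ← neg_sub]
    exact neg_mem (Ideal.pow_le_pow_right (hk.id_le a) (hcauchy a b hab))
  refine ⟨L, fun j => ?_⟩
  have hLk : L - z (k j) ∈ I ^ k j := by
    rw [← neg_sub, ← hsmul]
    exact neg_mem (SModEq.sub_mem.mp (hL (k j)))
  rw [← sub_add_sub_cancel _ (z (k j))]
  exact add_mem hLk (hcauchy j (k j) (hk.id_le j))

/-- Baire category theorem for the `I`-adic topology of a precomplete ring. -/
theorem Ideal.AdicInteriorDense.exists_mem_iInter [IsPrecomplete I R] {ι : Type*} [Countable ι]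
    {G : ι → Set R} (hG : ∀ i, I.AdicInteriorDense (G i)) (y : R) (n : ℕ) :
    ∃ z, z - y ∈ I ^ n ∧ ∀ i, z ∈ G i := by
  cases isEmpty_or_nonempty ι
  · exact ⟨y, by simp, isEmptyElim⟩
  obtain ⟨e, he⟩ := exists_surjective_nat ι
  have step : ∀ (j : ℕ) (s : R × ℕ), ∃ s' : R × ℕ, s'.1 - s.1 ∈ I ^ s.2 ∧ s.2 < s'.2 ∧
      ∀ w, w - s'.1 ∈ I ^ s'.2 → w ∈ G (e j) := by
    intro j s
    obtain ⟨z, k, hz, hball⟩ := hG (e j) s.1 s.2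
    exact ⟨(z, max k (s.2 + 1)), hz, by omega,
      fun w hw => hball w (Ideal.pow_le_pow_right (le_max_left _ _) hw)⟩
  choose next hnext using step
  let seq : ℕ → R × ℕ := fun j => Nat.rec (y, n) next j
  obtain ⟨L, hL⟩ := IsPrecomplete.exists_forall_sub_mem_pow (z := fun j => (seq j).1)
    (strictMono_nat_of_lt_succ fun j => (hnext j (seq j)).2.1) fun j => (hnext j (seq j)).1
  refine ⟨L, hL 0, fun i => ?_⟩
  obtain ⟨j, rfl⟩ := he i
  exact (hnext j (seq j)).2.2 L (hL (j + 1))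

end AdicBaire

section LocalRing

variable {T : Type*} [CommRing T] [IsLocalRing T]

theorem pow_maximalIdeal_not_le {q : Ideal T} [q.IsPrime] (hq : q ≠ maximalIdeal T) (n : ℕ) :
    ¬ maximalIdeal T ^ n ≤ q := fun h =>
  hq ((maximalIdeal.isMaximal T).eq_of_le ‹q.IsPrime›.ne_top (Ideal.IsPrime.le_of_pow_le h)).symm

theorem infinite_quotient_of_ne_maximalIdeal {q : Ideal T} [q.IsPrime]
    (hq : q ≠ maximalIdeal T) : Infinite (T ⧸ q) := by
  by_contra hfin
  have := not_infinite_iff_finite.mp hfin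
  exact hq (eq_maximalIdeal (Ideal.Quotient.maximal_of_isField q (Finite.isField_of_domain _)))

/-- Lifts of distinct residues `c ≠ d` give classes `v + c a ≠ v + d a` modulo `J`. -/
theorem exists_mk_add_mul_notMem {J : Ideal T} {a : T} (ha : a ∉ J) (v : T)
    {D : Set (T ⧸ J)} (hD : #D < #(ResidueField T)) :
    ∃ r : T, Ideal.Quotient.mk J (v + r * a) ∉ D := by
  by_contra! h
  let ρ := Function.surjInv (residue_surjective (R := T))
  refine hD.not_ge (mk_le_of_injective (f := fun c => ⟨_, h (ρ c)⟩) fun c d hcd => ?_)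
  have hsub : (ρ c - ρ d) * a ∈ J := by
    rw [← Ideal.Quotient.eq_zero_iff_mem, sub_mul, map_sub, sub_eq_zero]
    simpa using congrArg Subtype.val hcd
  have hmem : ρ c - ρ d ∈ maximalIdeal T := by
    by_contra hu
    exact ha ((Ideal.unit_mul_mem_iff_mem _ (notMem_maximalIdeal.mp hu)).mp hsub)
  rw [← residue_eq_zero_iff, map_sub, sub_eq_zero] at hmem
  simpa [ρ, Function.surjInv_eq] using hmem

theorem exists_sub_mem_pow_eval_notMem {q : Ideal T} [q.IsPrime] (hq : q ≠ maximalIdeal T)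
    {g : T[X]} (hg : g.map (Ideal.Quotient.mk q) ≠ 0) (y : T) (n : ℕ) :
    ∃ z, z - y ∈ maximalIdeal T ^ n ∧ g.eval z ∉ q := by
  have := infinite_quotient_of_ne_maximalIdeal hq
  obtain ⟨a, han, haq⟩ := SetLike.not_le_iff_exists.mp (pow_maximalIdeal_not_le hq n)
  have ha : Ideal.Quotient.mk q a ≠ 0 := by rwa [Ne, Ideal.Quotient.eq_zero_iff_mem]
  let φ : T ⧸ q → T ⧸ q := fun c => Ideal.Quotient.mk q y + Ideal.Quotient.mk q a * c
  have hφ : Function.Injective φ := fun c d hcd => mul_left_cancel₀ ha (add_left_cancel hcd)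
  obtain ⟨c, hc⟩ := ((Polynomial.finite_setOfPred_isRoot hg).preimage hφ.injOn).exists_notMem
  obtain ⟨c, rfl⟩ := Ideal.Quotient.mk_surjective c
  refine ⟨y + a * c, by simpa using Ideal.mul_mem_right c _ han, fun hmem => hc ?_⟩
  change (g.map (Ideal.Quotient.mk q)).eval (Ideal.Quotient.mk q (y + a * c)) = 0
  rwa [Polynomial.eval_map_apply, Ideal.Quotient.eq_zero_iff_mem]

end LocalRing

section Noetherian

variable {T : Type*} [CommRing T] [IsLocalRing T] [IsNoetherianRing T]

theorem pow_maximalIdeal_not_le_sup_pow_succ {q : Ideal T} [q.IsPrime]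
    (hq : q ≠ maximalIdeal T) (n : ℕ) :
    ¬ maximalIdeal T ^ n ≤ q ⊔ maximalIdeal T ^ (n + 1) := fun h =>
  pow_maximalIdeal_not_le hq n <| Submodule.le_of_le_smul_of_le_jacobson_bot
    (IsNoetherian.noetherian _) (maximalIdeal_le_jacobson ⊥) (by rwa [smul_eq_mul, ← pow_succ'])

theorem exists_notMem_sup_pow {q : Ideal T} {x : T} (hx : x ∉ q) :
    ∃ k, x ∉ q ⊔ maximalIdeal T ^ k := by
  by_contra! h
  have hKrull := (maximalIdeal T).iInf_pow_smul_eq_bot_of_isLocalRing (M := T ⧸ q)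
    (maximalIdeal.isMaximal T).ne_top
  apply hx
  rw [← Ideal.Quotient.eq_zero_iff_mem, ← Submodule.mem_bot T, ← hKrull, Submodule.mem_iInf]
  intro k
  rw [Ideal.smul_top_eq_map, Submodule.restrictScalars_mem, Ideal.Quotient.algebraMap_eq,
    ← Ideal.mem_comap, Ideal.comap_map_of_surjective' _ Ideal.Quotient.mk_surjective,
    Ideal.mk_ker, sup_comm]
  exact h k

theorem adicInteriorDense_setOf_mk_notMem {q : Ideal T} [q.IsPrime] (hq : q ≠ maximalIdeal T)
    {B : Set (T ⧸ q)} (hB : #B < #(ResidueField T)) :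
    (maximalIdeal T).AdicInteriorDense {y | Ideal.Quotient.mk q y ∉ B} := by
  intro y n
  set J := q ⊔ maximalIdeal T ^ (n + 1)
  obtain ⟨a, han, haJ⟩ := SetLike.not_le_iff_exists.mp (pow_maximalIdeal_not_le_sup_pow_succ hq n)
  obtain ⟨r, hr⟩ := exists_mk_add_mul_notMem haJ y (D := Ideal.Quotient.factor le_sup_left '' B)
    (mk_image_le.trans_lt hB)
  refine ⟨y + r * a, n + 1, by simpa using Ideal.mul_mem_left _ r han, fun w hw hwB => hr ?_⟩
  refine ⟨_, hwB, ?_⟩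
  rw [Ideal.Quotient.factor_mk, Ideal.Quotient.mk_eq_mk_iff_sub_mem]
  exact Ideal.mem_sup_right hw

theorem adicInteriorDense_setOf_eval_notMem {q : Ideal T} [q.IsPrime]
    (hq : q ≠ maximalIdeal T) {g : T[X]} (hg : g.map (Ideal.Quotient.mk q) ≠ 0) :
    (maximalIdeal T).AdicInteriorDense {y | g.eval y ∉ q} := by
  intro y n
  obtain ⟨z, hzy, hz⟩ := exists_sub_mem_pow_eval_notMem hq hg y n
  obtain ⟨k, hk⟩ := exists_notMem_sup_pow hz
  refine ⟨z, k, hzy, fun w hw hwq => hk ?_⟩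
  rw [← sub_sub_cancel (g.eval w) (g.eval z)]
  obtain ⟨c, hc⟩ := sub_dvd_eval_sub w z g
  exact Ideal.sub_mem _ (Ideal.mem_sup_left hwq)
    (Ideal.mem_sup_right (hc ▸ Ideal.mul_mem_right c _ hw))

end Noetherian


theorem Subring.injective_algebraMap_quotient {T : Type*} [CommRing T] (R : Subring T)
    {q : Ideal T} (h : Ideal.comap R.subtype q = ⊥) :
    Function.Injective (algebraMap R (T ⧸ q)) := by
  rw [injective_iff_map_eq_zero]
  intro r hr
  rw [← Ideal.mem_bot, ← h, Ideal.mem_comap]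
  exact Ideal.Quotient.eq_zero_iff_mem.mp hr

section Transcendental

variable {T : Type*} [CommRing T] [IsLocalRing T] [IsNoetherianRing T]
  [IsPrecomplete (maximalIdeal T) T] (R : Subring T) {C : Set (Ideal T)}

theorem exists_sub_mem_pow_forall_transcendental_of_countable (hC : C.Countable)
    (hprime : ∀ q ∈ C, q.IsPrime) (hmax : ∀ q ∈ C, q ≠ maximalIdeal T)
    (hRC : ∀ q ∈ C, Ideal.comap R.subtype q = ⊥) (hR : Countable R) (u : T) (n : ℕ) :
    ∃ x, x - u ∈ maximalIdeal T ^ n ∧ ∀ q ∈ C, Transcendental R (Ideal.Quotient.mk q x) := by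
  have := hC.to_subtype
  have : Countable R[X] := mk_le_aleph0_iff.mp <|
    cardinalMk_le_max.trans (max_le (mk_le_aleph0_iff.mpr hR) le_rfl)
  let G : C × {f : R[X] // f ≠ 0} → Set T := fun i => {y | aeval y i.2.1 ∉ i.1.1}
  have hG : ∀ i, (maximalIdeal T).AdicInteriorDense (G i) := by
    rintro ⟨⟨q, hq⟩, f, hf⟩
    have := hprime q hq
    simp only [G, ← eval_map_algebraMap]
    refine adicInteriorDense_setOf_eval_notMem (hmax q hq) ?_
    rwa [Polynomial.map_map, ← Ideal.Quotient.algebraMap_eq, ← IsScalarTower.algebraMap_eq,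
      Polynomial.map_ne_zero_iff (R.injective_algebraMap_quotient (hRC q hq))]
  obtain ⟨x, hxu, hx⟩ := Ideal.AdicInteriorDense.exists_mem_iInter hG u n
  refine ⟨x, hxu, fun q hq => transcendental_iff.mpr fun f hf => by_contra fun hf0 => ?_⟩
  apply hx ⟨⟨q, hq⟩, f, hf0⟩
  rw [← Ideal.Quotient.eq_zero_iff_mem, ← Ideal.Quotient.mkₐ_eq_mk R, ← aeval_algHom_apply]
  exact hf

theorem exists_sub_mem_pow_forall_transcendental_of_lt (hC : C.Countable)
    (hprime : ∀ q ∈ C, q.IsPrime) (hmax : ∀ q ∈ C, q ≠ maximalIdeal T)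
    (hRC : ∀ q ∈ C, Ideal.comap R.subtype q = ⊥)
    (hR : max #R ℵ₀ < #(ResidueField T)) (u : T) (n : ℕ) :
    ∃ x, x - u ∈ maximalIdeal T ^ n ∧ ∀ q ∈ C, Transcendental R (Ideal.Quotient.mk q x) := by
  have := hC.to_subtype
  have hG : ∀ q : C, (maximalIdeal T).AdicInteriorDense
      {y | Ideal.Quotient.mk q.1 y ∉ {z | IsAlgebraic R z}} := by
    rintro ⟨q, hq⟩
    have := hprime q hq
    have hinj := R.injective_algebraMap_quotient (hRC q hq)
    have := hinj.isDomain
    have := Module.isTorsionFree_iff_algebraMap_injective.mpr hinj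
    exact adicInteriorDense_setOf_mk_notMem (hmax q hq)
      ((Algebraic.cardinalMk_le_max R (T ⧸ q)).trans_lt hR)
  obtain ⟨x, hxu, hx⟩ := Ideal.AdicInteriorDense.exists_mem_iInter hG u n
  exact ⟨x, hxu, fun q hq => hx ⟨q, hq⟩⟩

theorem exists_sub_mem_pow_forall_transcendental (hC : C.Countable)
    (hprime : ∀ q ∈ C, q.IsPrime) (hmax : ∀ q ∈ C, q ≠ maximalIdeal T)
    (hRC : ∀ q ∈ C, Ideal.comap R.subtype q = ⊥)
    (hR : #R ≤ ℵ₀ ∨ #R < #(ResidueField T)) (u : T) (n : ℕ) :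
    ∃ x, x - u ∈ maximalIdeal T ^ n ∧ ∀ q ∈ C, Transcendental R (Ideal.Quotient.mk q x) := by
  rcases le_or_gt #R ℵ₀ with hcount | hunc
  · exact exists_sub_mem_pow_forall_transcendental_of_countable R hC hprime hmax hRC
      (mk_le_aleph0_iff.mp hcount) u n
  · refine exists_sub_mem_pow_forall_transcendental_of_lt R hC hprime hmax hRC ?_ u n
    rw [max_eq_left hunc.le]
    exact hR.resolve_left hunc.not_ge

end Transcendental

namespace Subring

variable {T : Type*} [CommRing T] [IsLocalRing T] (A : Subring T)

/-- The localization `A_{A ∩ m}`, realized inside `T` as the fractions `b / s` with `b, s ∈ A`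
and `s ∉ m` (such `s` are units of `T`). -/
def localizationAtMaximalIdeal : Subring T where
  carrier := {a | ∃ s ∈ A, s ∉ maximalIdeal T ∧ a * s ∈ A}
  zero_mem' := ⟨1, A.one_mem, Ideal.one_notMem _, by simp⟩
  one_mem' := ⟨1, A.one_mem, Ideal.one_notMem _, by simp⟩
  add_mem' := by
    rintro a b ⟨s, hs, hsm, has⟩ ⟨t, ht, htm, hbt⟩
    refine ⟨s * t, A.mul_mem hs ht, (maximalIdeal.isMaximal T).isPrime.mul_notMem hsm htm, ?_⟩
    rw [add_mul, ← mul_assoc, mul_comm s t, ← mul_assoc]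
    exact A.add_mem (A.mul_mem has ht) (A.mul_mem hbt hs)
  mul_mem' := by
    rintro a b ⟨s, hs, hsm, has⟩ ⟨t, ht, htm, hbt⟩
    refine ⟨s * t, A.mul_mem hs ht, (maximalIdeal.isMaximal T).isPrime.mul_notMem hsm htm, ?_⟩
    rw [mul_mul_mul_comm]
    exact A.mul_mem has hbt
  neg_mem' := by
    rintro a ⟨s, hs, hsm, has⟩
    exact ⟨s, hs, hsm, by simpa using A.neg_mem has⟩

theorem le_localizationAtMaximalIdeal : A ≤ A.localizationAtMaximalIdeal :=
  fun a ha => ⟨1, A.one_mem, Ideal.one_notMem _, by simpa using ha⟩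

-- If `a * s = b` with `s, b ∈ A` and `a` a unit of `T`, then `a⁻¹ * b = s`.
instance isLocalHom_subtype_localizationAtMaximalIdeal :
    IsLocalHom A.localizationAtMaximalIdeal.subtype := by
  refine ⟨fun x hu => ?_⟩
  obtain ⟨a, s, hs, hsm, has⟩ := x
  change IsUnit a at hu
  have hb : a * s ∉ maximalIdeal T :=
    notMem_maximalIdeal.mpr (hu.mul (notMem_maximalIdeal.mp hsm))
  have hinv : (↑hu.unit⁻¹ : T) ∈ A.localizationAtMaximalIdeal :=
    ⟨a * s, has, hb, by rwa [← mul_assoc, hu.val_inv_mul, one_mul]⟩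
  exact isUnit_iff_exists_inv.mpr ⟨⟨_, hinv⟩, Subtype.ext hu.mul_val_inv⟩

instance : IsLocalRing A.localizationAtMaximalIdeal :=
  Subring.isLocalRing_of_unit _ fun a ha hu =>
    isUnit_of_map_unit A.localizationAtMaximalIdeal.subtype
      (⟨a, ha⟩ : A.localizationAtMaximalIdeal) hu

theorem isMaximal_comap_subtype_localizationAtMaximalIdeal :
    (Ideal.comap A.localizationAtMaximalIdeal.subtype (maximalIdeal T)).IsMaximal := by
  rw [maximalIdeal_comap]
  exact maximalIdeal.isMaximal _

theorem comap_subtype_localizationAtMaximalIdeal_eq_bot {q : Ideal T}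
    (h : Ideal.comap A.subtype q = ⊥) :
    Ideal.comap A.localizationAtMaximalIdeal.subtype q = ⊥ := by
  refine eq_bot_iff.mpr fun ⟨a, s, hs, hsm, has⟩ haq => ?_
  have : (⟨a * s, has⟩ : A) ∈ Ideal.comap A.subtype q := q.mul_mem_right s haq
  rw [h, Ideal.mem_bot, Subtype.ext_iff] at this
  exact Subtype.ext ((notMem_maximalIdeal.mp hsm).mul_left_eq_zero.mp this)

theorem mk_localizationAtMaximalIdeal_le : #A.localizationAtMaximalIdeal ≤ #A * #A := by
  choose s hs hsm has using fun a : A.localizationAtMaximalIdeal => a.2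
  refine (mk_le_of_injective (β := A × A) (f := fun a => (⟨s a, hs a⟩, ⟨a * s a, has a⟩))
    fun a b hab => ?_).trans_eq (by simp)
  simp only [Prod.mk.injEq, Subtype.mk.injEq] at hab
  rw [← hab.1] at hab
  exact Subtype.ext ((notMem_maximalIdeal.mp (hsm a)).mul_left_inj.mp hab.2)

end Subring

theorem Cardinal.le_aleph0_or_lt_of_le_max {a b : Cardinal} (h : a ≤ max ℵ₀ b)
    (heq : a = max ℵ₀ b → b ≤ ℵ₀) : a ≤ ℵ₀ ∨ a < b := by
  rcases le_or_gt b ℵ₀ with hb | hb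
  · exact Or.inl (h.trans_eq (max_eq_left hb))
  · rw [max_eq_right hb.le] at h heq
    exact Or.inr (h.lt_of_ne fun hab => (heq hab).not_gt hb)

section AdjoinSingleton

variable {T : Type*} [CommRing T] (R : Subring T) {x : T}

theorem comap_subtype_adjoin_singleton_eq_bot {q : Ideal T} (hx : Transcendental R (Ideal.Quotient.mk q x)) :
    Ideal.comap (Algebra.adjoin R {x}).toSubring.subtype q = ⊥ := by
  refine eq_bot_iff.mpr fun ⟨a, ha⟩ haq => ?_
  rw [Subalgebra.mem_toSubring, Algebra.adjoin_singleton_eq_range_aeval] at ha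
  obtain ⟨f, rfl⟩ := ha
  have hf : f = 0 := transcendental_iff.mp hx f <| by
    rw [← Ideal.Quotient.mkₐ_eq_mk R, aeval_algHom_apply, Ideal.Quotient.mkₐ_eq_mk,
      Ideal.Quotient.eq_zero_iff_mem]
    exact haq
  simp [hf]

variable [IsLocalRing T] (x)

theorem le_localizationAtMaximalIdeal_adjoin_singleton :
    R ≤ (Algebra.adjoin R {x}).toSubring.localizationAtMaximalIdeal :=
  le_trans (fun r hr => Subalgebra.algebraMap_mem (Algebra.adjoin R {x}) (⟨r, hr⟩ : R))
    (Algebra.adjoin R {x}).toSubring.le_localizationAtMaximalIdeal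

theorem mk_localizationAtMaximalIdeal_adjoin_singleton [Infinite R] :
    #(Algebra.adjoin R {x}).toSubring.localizationAtMaximalIdeal = #R := by
  set A := (Algebra.adjoin R {x}).toSubring
  have hA : #A ≤ #R := (Algebra.cardinalMk_adjoin_le R {x}).trans
    (by simp [aleph0_le_mk, one_le_aleph0.trans (aleph0_le_mk R)])
  refine le_antisymm ?_ (mk_le_mk_of_subset (le_localizationAtMaximalIdeal_adjoin_singleton R x))
  calc #A.localizationAtMaximalIdeal ≤ #A * #A := A.mk_localizationAtMaximalIdeal_le
    _ ≤ #R * #R := mul_le_mul' hA hA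
    _ = #R := mul_eq_self (aleph0_le_mk R)

end AdjoinSingleton

theorem isPSubring_localizationAtMaximalIdeal {T : Type*} [CommRing T] [IsLocalRing T]
    {P : Ideal T} {A : Subring T}
    (hcard : #A.localizationAtMaximalIdeal ≤ max ℵ₀ #(ResidueField T) ∧
      (#A.localizationAtMaximalIdeal = max ℵ₀ #(ResidueField T) → #(ResidueField T) ≤ ℵ₀))
    (hP : Ideal.comap A.subtype P = ⊥)
    (hAss : ∀ Q ∈ associatedPrimes T T, Ideal.comap A.subtype Q = ⊥) :
    IsPSubring T P A.localizationAtMaximalIdeal :=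
  ⟨inferInstance, A.isMaximal_comap_subtype_localizationAtMaximalIdeal, hcard,
    A.comap_subtype_localizationAtMaximalIdeal_eq_bot hP,
    fun Q hQ => A.comap_subtype_localizationAtMaximalIdeal_eq_bot (hAss Q hQ)⟩

/-- Enlarging a `p`-subring to hit a prescribed coset of `m²`. -/
theorem pSubring_adjoin_coset
    (T : Type*) [CommRing T] [IsLocalRing T] [IsNoetherianRing T]
    [IsAdicComplete (maximalIdeal T) T]
    (hm : maximalIdeal T ∉ associatedPrimes T T)
    (P : Ideal T) (hP : P.IsPrime) (hPm : P ≠ maximalIdeal T)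
    (R : Subring T) (hR : IsPSubring T P R) (hRinf : Infinite R) (u : T) :
    ∃ S : Subring T, IsPSubring T P S ∧ R ≤ S ∧
      (∃ a ∈ S, a - u ∈ maximalIdeal T ^ 2) ∧
      Cardinal.mk S = Cardinal.mk R := by
  obtain ⟨-, -, hRcard, hRP, hRAss⟩ := hR
  set C := insert P (associatedPrimes T T)
  have hprime : ∀ q ∈ C, q.IsPrime :=
    Set.forall_mem_insert.mpr ⟨hP, fun q hq => (AssociatedPrimes.mem_iff.mp hq).isPrime⟩
  have hmax : ∀ q ∈ C, q ≠ maximalIdeal T :=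
    Set.forall_mem_insert.mpr ⟨hPm, fun q hq h => hm (h ▸ hq)⟩
  have hRC : ∀ q ∈ C, Ideal.comap R.subtype q = ⊥ := Set.forall_mem_insert.mpr ⟨hRP, hRAss⟩
  obtain ⟨x, hxu, hx⟩ := exists_sub_mem_pow_forall_transcendental R
    ((associatedPrimes.finite T T).insert P).countable hprime hmax hRC
    (le_aleph0_or_lt_of_le_max hRcard.1 hRcard.2) u 2
  have hcard := mk_localizationAtMaximalIdeal_adjoin_singleton R x
  refine ⟨_, isPSubring_localizationAtMaximalIdeal (hcard ▸ hRcard)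
    (comap_subtype_adjoin_singleton_eq_bot R (hx P (Set.mem_insert _ _)))
    (fun Q hQ => comap_subtype_adjoin_singleton_eq_bot R (hx Q (Set.mem_insert_of_mem _ hQ))),
    le_localizationAtMaximalIdeal_adjoin_singleton R x,
    ⟨x, Subring.le_localizationAtMaximalIdeal _ (Algebra.self_mem_adjoin_singleton R x), hxu⟩,
    hcard⟩
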